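/- arXiv:1702.08621 — 2 statements merged into one kernel-verified Lean document; each statement's English description precedes it below -/
import Mathlib

section
/- For integers k > i ≥ 2 and all m, n ≥ 0, the number G̃_{k,i}(m,n) of overpartitions counted by Ẽ_{k,i}(m,n) whose smallest part is non-overlined equals the number H̃_{k,i−1}(m,n) of overpartitions counted by Ẽ_{k,i−1}(m,n) whose smallest part is overlined. -/
open scoped BigOperators

/-- A part of an overpartition: its size, and whether it is overlined. -/
abbrev OPart := ℕ × Bool

/-- An overpartition: `f t` is the number of non-overlined parts equal to `t`, and
`fbar t` is the number of overlined parts equal to `t` (at most one, since only the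
first occurrence of a number may be overlined).  There are no parts of size `0`. -/
structure Overpartition where
  f : ℕ →₀ ℕ
  fbar : ℕ →₀ ℕ
  fbar_le_one : ∀ t, fbar t ≤ 1
  f_zero : f 0 = 0
  fbar_zero : fbar 0 = 0

namespace Overpartition

/-- the number of parts -/
def parts (l : Overpartition) : ℕ :=
  l.f.sum (fun _ m => m) + l.fbar.sum (fun _ m => m)

/-- weight: the sum of all parts -/
def wt (l : Overpartition) : ℕ :=
  l.f.sum (fun t m => t * m) + l.fbar.sum (fun t m => t * m)

/-- `V l s`: the number of overlined parts of size at most `s` -/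
def V (l : Overpartition) (s : ℕ) : ℕ := ∑ t ∈ Finset.Icc 1 s, l.fbar t

end Overpartition

/-- The difference/congruence conditions defining `Õ_{k,i}`. -/
def OCond (k i : ℕ) (l : Overpartition) : Prop :=
  (l.fbar 1 + l.f 2 ≤ i - 1) ∧
  (∀ t, 1 ≤ t → l.f (2*t) + l.fbar (2*t) + l.fbar (2*t+1) + l.f (2*t+2) ≤ k - 1) ∧
  (∀ t, 1 ≤ l.f (2*t+1) → l.f (2*t+2) ≤ k - 2) ∧
  (∀ t, 1 ≤ t → l.f (2*t) + l.fbar (2*t) + l.fbar (2*t+1) + l.f (2*t+2) = k - 1 →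
    t * l.f (2*t) + t * l.fbar (2*t) + t * l.fbar (2*t+1) + (t+1) * l.f (2*t+2)
      ≡ l.V (2*t+1) + i - 1 [MOD 2]) ∧
  (∀ t, 1 ≤ l.f (2*t+1) → l.f (2*t+2) = k - 2 →
    t + (t+1) * l.f (2*t+2) ≡ l.V (2*t+1) + i - 1 [MOD 2])

/-- Non-overlined parts are not congruent to `0, ±(2i-1)` modulo `4k-4`. -/
def PCond (k i : ℕ) (l : Overpartition) : Prop :=
  ∀ t, 0 < l.f t →
    ¬ t ≡ 0 [MOD 4*k-4] ∧ ¬ t ≡ 2*i-1 [MOD 4*k-4] ∧ ¬ t ≡ 4*k-3-2*i [MOD 4*k-4]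

/-- The difference/congruence conditions defining `Ẽ_{k,i}`. -/
def ECond (k i : ℕ) (l : Overpartition) : Prop :=
  l.f 1 ≤ i - 1 ∧
  (∀ t, 1 ≤ t → l.f t + l.fbar t + l.f (t+1) ≤ k - 1) ∧
  (∀ t, 1 ≤ t → l.f t + l.fbar t + l.f (t+1) = k - 1 →
    t * l.f t + t * l.fbar t + (t+1) * l.f (t+1) ≡ l.V t + i - 1 [MOD 2])

/-- the smallest part (in the order `1̄ < 1 < 2̄ < 2 < ⋯`) exists and is non-overlined -/
def SmallestNonOverlined (l : Overpartition) : Prop :=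
  ∃ s, 0 < l.f s ∧ l.fbar s = 0 ∧ ∀ t < s, l.f t = 0 ∧ l.fbar t = 0

/-- the smallest part (in the order `1̄ < 1 < 2̄ < 2 < ⋯`) exists and is overlined -/
def SmallestOverlined (l : Overpartition) : Prop :=
  ∃ s, 0 < l.fbar s ∧ ∀ t < s, l.f t = 0 ∧ l.fbar t = 0

def NoOverlined (l : Overpartition) : Prop := ∀ t, l.fbar t = 0

def NoOdd (l : Overpartition) : Prop := ∀ t, t % 2 = 1 → l.f t = 0 ∧ l.fbar t = 0

/-- the list of the parts of sizes `1,…,B` in increasing order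
(`1̄ < 1 < 2̄ < 2 < ⋯`); an overlined part is `(t, true)`. -/
def partsListUpTo (l : Overpartition) (B : ℕ) : List OPart :=
  (List.range B).flatMap (fun t =>
    (if l.fbar (t+1) = 1 then [((t+1 : ℕ), true)] else []) ++
    List.replicate (l.f (t+1)) ((t+1 : ℕ), false))

def obound (l : Overpartition) : ℕ := (l.f.support ∪ l.fbar.support).sup id + 1

/-- the list of all parts of `l` in increasing order -/
def partsList (l : Overpartition) : List OPart := partsListUpTo l (obound l)

/-- the multiset of parts of `l` -/
def partsMS (l : Overpartition) : Multiset OPart := (partsList l : Multiset OPart)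

/-- the least positive integer not belonging to `S` -/
def mex1 (S : Finset ℕ) : ℕ :=
  ((List.range (S.sup id + 2)).filter (fun r => decide (1 ≤ r ∧ r ∉ S))).headI

/-- the set of marks used by the already-marked parts satisfying `test` -/
def marksWhere (acc : List (OPart × ℕ)) (test : OPart → Bool) : Finset ℕ :=
  ((acc.filter (fun q => test q.1)).map (fun q => q.2)).toFinset

/-- process the parts in increasing order, assigning to each one the mark
computed by `markOf` from the previously marked parts -/
def markFold (markOf : List (OPart × ℕ) → OPart → ℕ) :
    List OPart → List (OPart × ℕ) → List (OPart × ℕ)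
  | [], acc => acc
  | p :: rest, acc => markFold markOf rest (acc ++ [(p, markOf acc p)])

/-- The Gordon marking rule: each part gets the smallest possible mark subject to:
(i) if `\overline{t+1}` is not a part, then all parts `t`, `t̄`, `t+1` get distinct
marks; (ii) if `\overline{t+1}` is a part, then the smallest mark assigned to a part
`t` or `t̄` may be reused for `t+1` or `\overline{t+1}`. -/
def gordonMarkOf (l : Overpartition) (acc : List (OPart × ℕ)) (p : OPart) : ℕ :=
  let same := marksWhere acc (fun q => decide (q.1 = p.1))
  let prev := marksWhere acc (fun q => decide (q.1 + 1 = p.1))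
  if l.fbar p.1 = 1 then
    mex1 (same ∪ (if h : prev.Nonempty then prev.erase (prev.min' h) else prev))
  else mex1 (same ∪ prev)

/-- the Gordon marking of `l`: the list of parts in increasing order with their marks -/
def gordonMarked (l : Overpartition) : List (OPart × ℕ) :=
  markFold (gordonMarkOf l) (partsList l) []

/-- `N_r`: the number of `r`-marked parts in the Gordon marking -/
def gordonN (l : Overpartition) (r : ℕ) : ℕ :=
  ((gordonMarked l).filter (fun q => decide (q.2 = r))).length

/-- The Göllnitz–Gordon marking rule (Definition 5.1): non-overlined odd and
overlined even parts get mark 1; an overlined odd part `\overline{2j+1}` gets the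
smallest mark different from those of `2j`, `\overline{2j}`; a non-overlined even part
`2j+2` gets the smallest mark different from earlier equal parts and, in case (b),
from the marks of `2j`, `\overline{2j}`, `\overline{2j+1}`; in case (c) it may not get
mark 1 and may reuse the smallest mark assigned to `2j` or `\overline{2j+1}`. -/
def ggMarkOf (l : Overpartition) (acc : List (OPart × ℕ)) (p : OPart) : ℕ :=
  if p.1 % 2 = 1 ∧ p.2 = false then 1
  else if p.1 % 2 = 0 ∧ p.2 = true then 1
  else if p.1 % 2 = 1 then
    mex1 (marksWhere acc (fun q => decide (q.1 = p.1 - 1)))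
  else
    let same := marksWhere acc (fun q => decide (q.1 = p.1))
    let lower := marksWhere acc
      (fun q => decide (q.1 = p.1 - 2 ∨ (q.1 = p.1 - 1 ∧ q.2 = true)))
    if 1 ∈ lower ∨ (l.f (p.1 - 1) = 0 ∧ l.fbar p.1 = 0) then
      mex1 (same ∪ lower)
    else
      mex1 (insert 1 same ∪ (if h : lower.Nonempty then lower.erase (lower.min' h) else lower))

/-- the Göllnitz–Gordon marking of `l` -/
def ggMarked (l : Overpartition) : List (OPart × ℕ) :=
  markFold (ggMarkOf l) (partsList l) []

/-- `N_r`: the number of `r`-marked parts in the Göllnitz–Gordon marking -/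
def ggN (l : Overpartition) (r : ℕ) : ℕ :=
  ((ggMarked l).filter (fun q => decide (q.2 = r))).length
/-- the 1-marked parts `λ^{(1)}_1 ≥ λ^{(1)}_2 ≥ ⋯` of the Göllnitz–Gordon marking,
in decreasing order (so index `j-1` holds `λ^{(1)}_j`) -/
def oneMarkedDesc (l : Overpartition) : List OPart :=
  (((ggMarked l).filter (fun q => decide (q.2 = 1))).map (fun q => q.1)).reverse

/-- the multiset of marked parts of a cluster: its `b`-th entry (0-indexed) is `(b+1)`-marked -/
def clusterMS (c : List OPart) : Multiset (OPart × ℕ) :=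
  ((c.zipIdx.map (fun q => (q.1, q.2 + 1))) : List (OPart × ℕ))

/-- there is a part of size `s` with mark `m` in the marked list `L` -/
def ExistsMarkedAt (L : List (OPart × ℕ)) (s m : ℕ) : Prop :=
  ∃ q ∈ L, q.1.1 = s ∧ q.2 = m

/-- conditions (i)–(iii) for the entry `y` (of mark `b+2`) following the entry `x`
(of mark `b+1`, i.e. 0-indexed position `b`) in a cluster -/
def chainStep (L : List (OPart × ℕ)) (b : ℕ) (x y : OPart) : Prop :=
  (x.1 % 2 = 1 → y.1 = x.1 + 1) ∧
  (x.1 % 2 = 0 →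
    (¬ ExistsMarkedAt L (x.1 + 2) (b + 1) → x.1 ≤ y.1 ∧ y.1 ≤ x.1 + 2) ∧
    (ExistsMarkedAt L (x.1 + 2) (b + 1) → x.1 ≤ y.1 ∧ y.1 ≤ x.1 + 1))

/-- cases (a), (b): the `j`-cluster is forced to be the singleton `λ^{(1)}_j` -/
def ForcedSingleton (one : List OPart) (j : ℕ) : Prop :=
  2 ≤ j ∧ ∃ cur prev, one[j-1]? = some cur ∧ one[j-2]? = some prev ∧
    (cur.1 = prev.1 ∨ (cur.1 % 2 = 1 ∧ prev.1 = cur.1 + 1))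

/-- `α` is the decomposition of the Göllnitz–Gordon marking of `l` into clusters
`α^{(N₁)}, …, α^{(1)}`: the `j`-cluster starts with the `j`-th largest 1-marked part,
the clusters partition the marked parts, forced singletons are singletons, consecutive
entries of a cluster obey conditions (i)–(iii), and each non-singleton-forced cluster
is a maximal such chain. -/
def IsClusterDecomp (l : Overpartition) (α : ℕ → List OPart) : Prop :=
  (∀ j, j = 0 ∨ ggN l 1 < j → α j = []) ∧
  (∀ j, 1 ≤ j → j ≤ ggN l 1 → (α j).head? = (oneMarkedDesc l)[j-1]?) ∧
  ((ggMarked l : Multiset (OPart × ℕ)) = ∑ j ∈ Finset.Icc 1 (ggN l 1), clusterMS (α j)) ∧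
  (∀ j, ForcedSingleton (oneMarkedDesc l) j → (α j).length = 1) ∧
  (∀ j b x y, (α j)[b]? = some x → (α j)[b+1]? = some y → chainStep (ggMarked l) b x y) ∧
  (∀ j, 1 ≤ j → j ≤ ggN l 1 → ¬ ForcedSingleton (oneMarkedDesc l) j →
    ∀ last, (α j).getLast? = some last →
      ¬ ∃ p : OPart,
        ((p, (α j).length + 1) ∈
          ((ggMarked l : Multiset (OPart × ℕ)) - ∑ j' ∈ Finset.Icc j (ggN l 1), clusterMS (α j'))) ∧
        chainStep (ggMarked l) ((α j).length - 1) last p)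

/-- the set `β(j)` (of 0-indexed positions): positions `c` such that
`|β_c^{(j)}| − |β_c^{(j+1)}| ≤ 2`, with strict inequality if either part is odd -/
def BetaIdx (α : ℕ → List OPart) (j : ℕ) : Set ℕ :=
  {c | ∃ x y, (α j)[c]? = some x ∧ (α (j+1))[c]? = some y ∧
     (x.1 : ℤ) - (y.1 : ℤ) ≤ 2 ∧ ((x.1 % 2 = 1 ∨ y.1 % 2 = 1) → (x.1 : ℤ) - (y.1 : ℤ) < 2)}

/-- `ν'` is obtained from `ν` by the second dilation of `p`-th kind: the odd part
`old` of the cluster `β^{(p)}` is replaced by the even part of size `|old|+1` with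
opposite overline status; when `p > 1` (in which case `β^{(p-1)}` must have no odd
part), additionally one part `chosen` of `β^{(p-1)}` — the entry indexed by the set
`β(p-1)` if it is nonempty, and otherwise the part of `β^{(p-1)}` of smallest size
and largest mark — is replaced by the part of size `|chosen|+1` with opposite
overline status. -/
def SecondDilationRel (ν ν' : Overpartition) (p : ℕ) : Prop :=
  ∃ α : ℕ → List OPart, IsClusterDecomp ν α ∧ 1 ≤ p ∧ p ≤ ggN ν 1 ∧
    ∃ old ∈ α p, old.1 % 2 = 1 ∧
      ((p = 1 ∧ partsMS ν' = (partsMS ν).erase old + {(old.1 + 1, !old.2)}) ∨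
       (1 < p ∧ (∀ q ∈ α (p-1), q.1 % 2 = 0) ∧
        ∃ c chosen, (α (p-1))[c]? = some chosen ∧
          ((BetaIdx α (p-1) = ∅ ∧ (∀ q ∈ α (p-1), chosen.1 ≤ q.1) ∧
             (∀ c' q, c < c' → (α (p-1))[c']? = some q → chosen.1 < q.1)) ∨
           c ∈ BetaIdx α (p-1)) ∧
          partsMS ν' = ((partsMS ν).erase old).erase chosen
            + {(old.1 + 1, !old.2), (chosen.1 + 1, !chosen.2)}))

/-- the second reduction of `p`-th kind: the inverse of the second dilation of `p`-th kind -/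
def SecondReductionRel (ν ν' : Overpartition) (p : ℕ) : Prop := SecondDilationRel ν' ν p

/-- the set of overpartitions satisfying the conditions of `Ẽ_{k,i}` whose Gordon
marking has exactly `N r` `r`-marked parts for `1 ≤ r ≤ k-1` -/
def ESetN (k i : ℕ) (N : ℕ → ℕ) : Set Overpartition :=
  {l | ECond k i l ∧ (∀ r, 1 ≤ r → r ≤ k-1 → gordonN l r = N r) ∧
    l.parts = ∑ j ∈ Finset.Icc 1 (k-1), N j}

def GSetN (k i : ℕ) (N : ℕ → ℕ) : Set Overpartition :=
  {l ∈ ESetN k i N | SmallestNonOverlined l}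

def HSetN (k i : ℕ) (N : ℕ → ℕ) : Set Overpartition :=
  {l ∈ ESetN k i N | SmallestOverlined l}

def BSetN (k i : ℕ) (N : ℕ → ℕ) : Set Overpartition :=
  {l ∈ GSetN k i N | NoOverlined l}

/-- the set of overpartitions satisfying the conditions of `Õ_{k,i}` whose
Göllnitz–Gordon marking has exactly `N r` `r`-marked parts for `1 ≤ r ≤ k-1` -/
def OSetN (k i : ℕ) (N : ℕ → ℕ) : Set Overpartition :=
  {l | OCond k i l ∧ (∀ r, 1 ≤ r → r ≤ k-1 → ggN l r = N r) ∧
    l.parts = ∑ j ∈ Finset.Icc 1 (k-1), N j}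

def WSetN (k i : ℕ) (N : ℕ → ℕ) : Set Overpartition :=
  {l ∈ OSetN k i N | NoOdd l}

/-- `(a;q)_n = ∏_{j=0}^{n-1} (1 - a q^j)` -/
noncomputable def qPoch (a q : ℂ) (n : ℕ) : ℂ := ∏ j ∈ Finset.range n, (1 - a * q ^ j)

/-- `(a;q)_∞ = ∏_{j=0}^{∞} (1 - a q^j)` -/
noncomputable def qPochInf (a q : ℂ) : ℂ := ∏' j : ℕ, (1 - a * q ^ j)

/-- `(a;q)_{n-1} = (a;q)_n / (1 - a q^{n-1})`, the standard meaning of a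
`q`-Pochhammer symbol with subscript `n - 1` (also for `n = 0`). -/
noncomputable def qPochSub1 (a q : ℂ) (n : ℕ) : ℂ := qPoch a q n / (1 - a * q ^ ((n : ℤ) - 1))

/-- sequences `N` with `N 1 ≥ N 2 ≥ ⋯ ≥ N (k-1) ≥ 0` (and `N j = 0` otherwise),
encoding the summation indices `N₁ ≥ ⋯ ≥ N_{k-1} ≥ 0` -/
def DecSeq (k : ℕ) : Set (ℕ → ℕ) :=
  {N | N 0 = 0 ∧ (∀ j, 1 ≤ j → N (j+1) ≤ N j) ∧ (∀ j, k ≤ j → N j = 0)}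

def doubleEmb : ℕ ↪ ℕ := ⟨fun t => 2 * t, mul_right_injective₀ two_ne_zero⟩

/-- doubling every part of an overpartition -/
noncomputable def double (l : Overpartition) : Overpartition where
  f := Finsupp.embDomain doubleEmb l.f
  fbar := Finsupp.embDomain doubleEmb l.fbar
  fbar_le_one := by
    intro t
    by_cases h : ∃ s, 2 * s = t
    · obtain ⟨s, rfl⟩ := h
      exact (Finsupp.embDomain_apply_self doubleEmb l.fbar s).trans_le (l.fbar_le_one s)
    · rw [Finsupp.embDomain_notin_range]
      · exact Nat.zero_le _
      · rintro ⟨s, rfl⟩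
        exact h ⟨s, rfl⟩
  f_zero := (Finsupp.embDomain_apply_self doubleEmb l.f 0).trans l.f_zero
  fbar_zero := (Finsupp.embDomain_apply_self doubleEmb l.fbar 0).trans l.fbar_zero

/-!
Overlining one copy of the smallest part `s` is the bijection. It leaves the underlying
partition unchanged, hence also the weight, the number of parts, and the window sums
`f_t + f_{t̄} + f_{t+1}` and their weighted versions for `t ≥ s`; and it raises `V_t` by one
exactly for `t ≥ s`, which compensates passing from `i` to `i - 1` in the parity condition.
Below `s` the window conditions follow from the one at `s`, and `f_1 ≤ i - 1` becomes
`f_1 ≤ i - 2` when `s = 1`.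
-/

namespace Overpartition

variable (l : Overpartition) {s t : ℕ}

@[ext]
theorem ext {l l' : Overpartition} (hf : l.f = l'.f) (hfbar : l.fbar = l'.fbar) : l = l' := by
  cases l; cases l'; simp_all

noncomputable def mult : ℕ →₀ ℕ := l.f + l.fbar

@[simp]
theorem mult_apply : l.mult t = l.f t + l.fbar t := rfl

theorem parts_eq_sum_mult : l.parts = l.mult.sum fun _ m => m := by
  rw [mult, Finsupp.sum_add_index' (fun _ => rfl) (fun _ _ _ => rfl)]
  rfl

theorem wt_eq_sum_mult : l.wt = l.mult.sum fun t m => t * m := by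
  rw [mult, Finsupp.sum_add_index' (fun _ => mul_zero _) (fun _ _ _ => mul_add _ _ _)]
  rfl

theorem V_succ : l.V (t + 1) = l.V t + l.fbar (t + 1) :=
  Finset.sum_Icc_succ_top (Nat.le_add_left 1 t) _

/-- Junk value `0` for the empty overpartition. -/
noncomputable def minSize : ℕ := sInf (l.mult.support : Set ℕ)

theorem mult_eq_zero_of_lt_minSize : ∀ t < l.minSize, l.mult t = 0 := fun _ h =>
  Finsupp.notMem_support_iff.1 (Nat.notMem_of_lt_sInf h)

theorem minSize_eq (hlow : ∀ t < s, l.mult t = 0) (hs : l.mult s ≠ 0) : l.minSize = s :=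
  le_antisymm (Nat.sInf_le (Finsupp.mem_support_iff.2 hs))
    (le_csInf ⟨s, Finsupp.mem_support_iff.2 hs⟩ fun t ht =>
      not_lt.1 fun h => Finsupp.mem_support_iff.1 ht (hlow t h))

theorem smallestOverlined_iff : SmallestOverlined l ↔ l.fbar l.minSize = 1 := by
  constructor
  · rintro ⟨s, hs, hlow⟩
    rw [l.minSize_eq (s := s) (fun t ht => by simp [hlow t ht]) (by simp only [mult_apply]; omega)]
    exact le_antisymm (l.fbar_le_one s) hs
  · intro h
    exact ⟨l.minSize, by omega, fun t ht => by simpa using l.mult_eq_zero_of_lt_minSize t ht⟩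

theorem smallestNonOverlined_iff :
    SmallestNonOverlined l ↔ 0 < l.f l.minSize ∧ l.fbar l.minSize = 0 := by
  constructor
  · rintro ⟨s, hf, hb, hlow⟩
    rw [l.minSize_eq (s := s) (fun t ht => by simp [hlow t ht]) (by simp only [mult_apply]; omega)]
    exact ⟨hf, hb⟩
  · rintro ⟨hf, hb⟩
    exact ⟨l.minSize, hf, hb, fun t ht => by simpa using l.mult_eq_zero_of_lt_minSize t ht⟩

noncomputable def unoverline (s : ℕ) : Overpartition where
  f := l.f + Finsupp.single s (l.fbar s)
  fbar := l.fbar.erase s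
  fbar_le_one t := by
    rw [Finsupp.erase_apply]
    split_ifs
    exacts [zero_le_one, l.fbar_le_one t]
  f_zero := by
    rcases eq_or_ne s 0 with rfl | hs
    · simp [l.f_zero, l.fbar_zero]
    · simp [l.f_zero, hs]
  fbar_zero := by simp [Finsupp.erase_apply, l.fbar_zero]

theorem unoverline_f : (l.unoverline s).f t = l.f t + if t = s then l.fbar s else 0 := by
  simp [unoverline, Finsupp.single_apply, eq_comm]

theorem unoverline_fbar : (l.unoverline s).fbar t = if t = s then 0 else l.fbar t :=
  Finsupp.erase_apply

theorem mult_unoverline : (l.unoverline s).mult = l.mult := by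
  ext t
  simp only [mult_apply, unoverline_f, unoverline_fbar]
  split_ifs with h <;> simp [h]

theorem minSize_unoverline : (l.unoverline s).minSize = l.minSize := by
  rw [minSize, minSize, mult_unoverline]

theorem parts_unoverline : (l.unoverline s).parts = l.parts := by
  rw [parts_eq_sum_mult, parts_eq_sum_mult, mult_unoverline]

theorem wt_unoverline : (l.unoverline s).wt = l.wt := by
  rw [wt_eq_sum_mult, wt_eq_sum_mult, mult_unoverline]

theorem V_unoverline_add : (l.unoverline s).V t + (if s ≤ t then l.fbar s else 0) = l.V t := by
  have hsplit : ∀ r, l.fbar r = (l.unoverline s).fbar r + if r = s then l.fbar s else 0 := by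
    intro r
    rw [unoverline_fbar]
    split_ifs with h <;> simp [h]
  simp only [V]
  rw [Finset.sum_congr rfl fun r _ => hsplit r, Finset.sum_add_distrib, Finset.sum_ite_eq']
  simp only [Finset.mem_Icc]
  rcases eq_or_ne s 0 with rfl | hs
  · simp [l.fbar_zero]
  · simp [Nat.one_le_iff_ne_zero.2 hs]

theorem unoverline_injOn : Set.InjOn (unoverline · s) {l | l.fbar s = 1} := by
  intro a ha b hb h
  ext t
  · have := congrArg (fun l => l.f t) h
    simp only [unoverline_f] at this
    split_ifs at this <;> simp_all
  · have := congrArg (fun l => l.fbar t) h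
    simp only [unoverline_fbar] at this
    split_ifs at this with hts
    · simp_all
    · exact this

noncomputable def overline (s : ℕ) (hb : l.fbar s = 0) (hf : 0 < l.f s) : Overpartition where
  f := l.f - Finsupp.single s 1
  fbar := l.fbar + Finsupp.single s 1
  fbar_le_one t := by
    rcases eq_or_ne t s with rfl | h
    · simp [hb]
    · simp [Ne.symm h, l.fbar_le_one t]
  f_zero := by simp [l.f_zero]
  fbar_zero := by
    have hs : s ≠ 0 := by rintro rfl; simp [l.f_zero] at hf
    simp [hs, l.fbar_zero]

theorem overline_fbar_self (hb : l.fbar s = 0) (hf : 0 < l.f s) :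
    (l.overline s hb hf).fbar s = 1 := by
  simp [overline, hb]

theorem unoverline_overline (hb : l.fbar s = 0) (hf : 0 < l.f s) :
    (l.overline s hb hf).unoverline s = l := by
  ext t
  · simp only [unoverline_f, overline_fbar_self]
    simp only [overline, Finsupp.tsub_apply, Finsupp.single_apply]
    split_ifs <;> subst_vars <;> omega
  · simp only [unoverline_fbar, overline, Finsupp.add_apply, Finsupp.single_apply]
    split_ifs <;> subst_vars <;> simp_all

theorem minSize_overline (hb : l.fbar s = 0) (hf : 0 < l.f s) :
    (l.overline s hb hf).minSize = l.minSize := by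
  rw [← minSize_unoverline, unoverline_overline]

theorem smallestNonOverlined_unoverline_minSize (hl : l.fbar l.minSize = 1) :
    SmallestNonOverlined (l.unoverline l.minSize) := by
  rw [smallestNonOverlined_iff, minSize_unoverline, unoverline_f, unoverline_fbar, if_pos rfl,
    if_pos rfl, hl]
  exact ⟨Nat.lt_add_left _ one_pos, rfl⟩

theorem smallestOverlined_overline_minSize (hb : l.fbar l.minSize = 0) (hf : 0 < l.f l.minSize) :
    SmallestOverlined (l.overline l.minSize hb hf) := by
  rw [smallestOverlined_iff, minSize_overline, overline_fbar_self]

end Overpartition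

open Overpartition

def ECondAt (k i : ℕ) (l : Overpartition) (t : ℕ) : Prop :=
  l.mult t + l.f (t + 1) ≤ k - 1 ∧
  (l.mult t + l.f (t + 1) = k - 1 →
    t * l.mult t + (t + 1) * l.f (t + 1) ≡ l.V t + i - 1 [MOD 2])

section ECond

variable {k i s t : ℕ} {l : Overpartition}

theorem ECond_iff_forall_ECondAt :
    ECond k i l ↔ l.f 1 ≤ i - 1 ∧ ∀ t, 1 ≤ t → ECondAt k i l t := by
  simp only [ECond, ECondAt, mult_apply, mul_add]
  exact ⟨fun ⟨h1, h2, h3⟩ => ⟨h1, fun t ht => ⟨h2 t ht, h3 t ht⟩⟩,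
    fun ⟨h1, h⟩ => ⟨h1, fun t ht => (h t ht).1, fun t ht => (h t ht).2⟩⟩

theorem ECondAt_of_lt (hlow : ∀ t < s, l.mult t = 0) (hs : 0 < l.mult s)
    (hcond : ECondAt k i l s) (ht : t < s) : ECondAt k i l t := by
  have h0 := hlow t ht
  simp only [ECondAt, mult_apply] at hs hcond h0 ⊢
  obtain ⟨hsum, hpar⟩ := hcond
  rcases (by omega : t + 1 < s ∨ t + 1 = s) with hlt | rfl
  · have h1 := hlow (t + 1) hlt
    simp only [mult_apply] at h1
    exact ⟨by omega, fun h => by omega⟩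
  · refine ⟨by omega, fun heq => ?_⟩
    have hf : l.f (t + 1 + 1) = 0 := by omega
    have hb : l.fbar (t + 1) = 0 := by omega
    have h := hpar (by omega)
    rw [V_succ, hb, hf, add_zero, add_zero, mul_zero, add_zero] at h
    rw [Nat.add_eq_zero_iff.1 h0 |>.1, Nat.add_eq_zero_iff.1 h0 |>.2]
    simpa using h

theorem ECond_iff_forall_ECondAt_ge (hlow : ∀ t < s, l.mult t = 0) (hs : 0 < l.mult s) :
    ECond k i l ↔ l.f 1 ≤ i - 1 ∧ ∀ t, s ≤ t → ECondAt k i l t := by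
  have hs1 : 1 ≤ s := Nat.one_le_iff_ne_zero.2 fun h0 => by
    simp [h0, l.f_zero, l.fbar_zero] at hs
  rw [ECond_iff_forall_ECondAt]
  refine and_congr_right fun _ => ⟨fun h t hst => h t (hs1.trans hst), fun h t _ => ?_⟩
  rcases lt_or_ge t s with hts | hst
  · exact ECondAt_of_lt hlow hs (h s le_rfl) hts
  · exact h t hst

theorem ECondAt_unoverline_iff (hl : l.fbar s = 1) (hi : 1 ≤ i) (ht : s ≤ t) :
    ECondAt k i (l.unoverline s) t ↔ ECondAt k (i - 1) l t := by
  have hV := l.V_unoverline_add (s := s) (t := t)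
  rw [if_pos ht, hl] at hV
  have hnext : (l.unoverline s).f (t + 1) = l.f (t + 1) := by
    rw [unoverline_f, if_neg (by omega), add_zero]
  rw [ECondAt, ECondAt, mult_unoverline, hnext, ← hV,
    show (l.unoverline s).V t + 1 + (i - 1) - 1 = (l.unoverline s).V t + i - 1 by omega]

theorem ECond_unoverline_iff (hi : 2 ≤ i) (hlow : ∀ t < s, l.mult t = 0) (hl : l.fbar s = 1) :
    ECond k i (l.unoverline s) ↔ ECond k (i - 1) l := by
  have hs : 0 < l.mult s := by simp [hl]
  rw [ECond_iff_forall_ECondAt_ge (by rwa [mult_unoverline]) (by rwa [mult_unoverline]),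
    ECond_iff_forall_ECondAt_ge hlow hs]
  refine and_congr ?_ (forall₂_congr fun t ht => ECondAt_unoverline_iff hl (by omega) ht)
  rw [unoverline_f]
  split_ifs with h1
  · subst h1
    omega
  · have hs0 : s ≠ 0 := by rintro rfl; simp [l.fbar_zero] at hl
    have := hlow 1 (by omega)
    simp only [mult_apply] at this
    omega

end ECond

theorem G_eq_H_pred_general
    (k i : ℕ) (hi : 2 ≤ i) (m n : ℕ) :
    {l : Overpartition | l.wt = n ∧ l.parts = m ∧ ECond k i l ∧ SmallestNonOverlined l}.ncard
      = {l : Overpartition |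
          l.wt = n ∧ l.parts = m ∧ ECond k (i-1) l ∧ SmallestOverlined l}.ncard := by
  refine (Set.BijOn.ncard_eq (f := fun l : Overpartition => l.unoverline l.minSize)
    ⟨?_, ?_, ?_⟩).symm
  · rintro l ⟨hw, hp, hE, hl⟩
    rw [smallestOverlined_iff] at hl
    exact ⟨by rwa [wt_unoverline], by rwa [parts_unoverline],
      (ECond_unoverline_iff hi l.mult_eq_zero_of_lt_minSize hl).2 hE,
      smallestNonOverlined_unoverline_minSize l hl⟩
  · rintro a ⟨-, -, -, ha⟩ b ⟨-, -, -, hb⟩ hab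
    rw [smallestOverlined_iff] at ha hb
    have hmin : a.minSize = b.minSize := by
      simpa only [minSize_unoverline] using congrArg minSize hab
    rw [hmin] at ha
    exact unoverline_injOn ha hb (by simpa only [hmin] using hab)
  · rintro l ⟨hw, hp, hE, hl⟩
    obtain ⟨hf, hb⟩ := (smallestNonOverlined_iff l).1 hl
    have hu := l.unoverline_overline hb hf
    have hlow := (l.overline l.minSize hb hf).mult_eq_zero_of_lt_minSize
    rw [minSize_overline] at hlow
    refine ⟨l.overline l.minSize hb hf, ⟨by rwa [← wt_unoverline, hu],
      by rwa [← parts_unoverline, hu], ?_, l.smallestOverlined_overline_minSize hb hf⟩, ?_⟩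
    · rwa [← ECond_unoverline_iff hi hlow (l.overline_fbar_self hb hf), hu]
    · simp only [minSize_overline, hu]

/-- `G̃_{k,i}(m,n) = H̃_{k,i-1}(m,n)` for `k > i ≥ 2` (Theorem 3.1, (3.2)). -/
theorem G_eq_H_pred
    (k i : ℕ) (hik : i < k) (hi : 2 ≤ i) (m n : ℕ) :
    {l : Overpartition | l.wt = n ∧ l.parts = m ∧ ECond k i l ∧ SmallestNonOverlined l}.ncard
      = {l : Overpartition |
          l.wt = n ∧ l.parts = m ∧ ECond k (i-1) l ∧ SmallestOverlined l}.ncard :=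
  G_eq_H_pred_general k i hi m n
end

section
/- Let λ be an overpartition whose Göllnitz–Gordon marking is decomposed into clusters GG(λ) = {α^{(N₁)}, α^{(N₁−1)}, …, α^{(1)}}. Then for each 1 ≤ t ≤ N₁, the cluster α^{(t)} contains at most one odd part; moreover, if α^{(t)} contains an odd part α_d^{(t)}, then |α_d^{(t)}| − |α_1^{(t)}| ≤ 1. -/
open scoped BigOperators

/-! Every entry preceding an odd entry `x` of a cluster has size `|x| - 1`, hence is even, and
both claims follow. An odd part of mark `m ≥ 2` is overlined, and the marks `1, …, m - 1` all
occur on parts of size `|x| - 1`. Walking down the cluster from `x`, the chain conditions then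
pin each earlier entry to size `|x| - 1`: an even entry cannot jump by `2`, because a part of
size `|x| - 1` carries the mark of that entry, and an odd entry `y` cannot occur at all,
because a part of size `|y| + 1` would carry its mark, which the marking rule forbids for an
overlined odd `y` and which makes the cluster a forced singleton when `y` is its head. -/

lemma find?_range_eq_some_mex1 (S : Finset ℕ) :
    (List.range (S.sup id + 2)).find? (fun r => decide (1 ≤ r ∧ r ∉ S)) = some (mex1 S) := by
  have hbound : S.sup id + 1 ∈
      (List.range (S.sup id + 2)).filter (fun r => decide (1 ≤ r ∧ r ∉ S)) := by
    simp only [List.mem_filter, List.mem_range, decide_eq_true_eq]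
    refine ⟨by omega, by omega, fun hS => ?_⟩
    have := Finset.le_sup (f := id) hS
    simp only [id_eq] at this
    omega
  rw [← List.head?_filter, mex1]
  cases hL : (List.range (S.sup id + 2)).filter (fun r => decide (1 ≤ r ∧ r ∉ S)) with
  | nil => rw [hL] at hbound; exact absurd hbound List.not_mem_nil
  | cons a tl => rfl

lemma mex1_not_mem (S : Finset ℕ) : mex1 S ∉ S := by
  have := List.find?_range_eq_some.1 (find?_range_eq_some_mex1 S)
  simp_all

lemma mem_of_lt_mex1 {S : Finset ℕ} {r : ℕ} (hr : 1 ≤ r) (hrS : r < mex1 S) : r ∈ S := by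
  have := (List.find?_range_eq_some.1 (find?_range_eq_some_mex1 S)).2.2 r hrS
  simp_all

lemma mem_marksWhere {acc : List (OPart × ℕ)} {test : OPart → Bool} {r : ℕ} :
    r ∈ marksWhere acc test ↔ ∃ q ∈ acc, test q.1 = true ∧ q.2 = r := by
  simp [marksWhere, and_assoc]

section MarkFold

variable (markOf : List (OPart × ℕ) → OPart → ℕ)

lemma markFold_eq_append (L : List OPart) (acc : List (OPart × ℕ)) :
    ∃ R, markFold markOf L acc = acc ++ R ∧ R.map Prod.fst = L := by
  induction L generalizing acc with
  | nil => exact ⟨[], by simp [markFold]⟩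
  | cons p L ih =>
    obtain ⟨R, hR, hRL⟩ := ih (acc ++ [(p, markOf acc p)])
    exact ⟨(p, markOf acc p) :: R, by simp [markFold, hR], by simp [hRL]⟩

lemma map_fst_markFold (L : List OPart) (acc : List (OPart × ℕ)) :
    (markFold markOf L acc).map Prod.fst = acc.map Prod.fst ++ L := by
  obtain ⟨R, hR, hRL⟩ := markFold_eq_append markOf L acc
  simp [hR, hRL]

lemma mem_markFold (L : List OPart) (acc : List (OPart × ℕ)) {z : OPart × ℕ}
    (hz : z ∈ markFold markOf L acc) :
    z ∈ acc ∨ ∃ A R, markFold markOf L acc = A ++ z :: R ∧ z.2 = markOf A z.1 := by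
  induction L generalizing acc with
  | nil => exact Or.inl hz
  | cons p L ih =>
    rcases ih _ hz with hz | hsplit
    · rcases List.mem_append.1 hz with hz | hz
      · exact Or.inl hz
      · obtain rfl : z = (p, markOf acc p) := List.mem_singleton.1 hz
        obtain ⟨R, hR, -⟩ := markFold_eq_append markOf L (acc ++ [(p, markOf acc p)])
        exact Or.inr ⟨acc, R, by simp [markFold, hR], rfl⟩
    · exact Or.inr hsplit

end MarkFold

lemma partsListUpTo_pairwise (l : Overpartition) (B : ℕ) :
    (partsListUpTo l B).Pairwise (fun a b : OPart => a.1 ≤ b.1) := by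
  have hblock : ∀ t, ∀ x ∈ (if l.fbar (t+1) = 1 then [((t+1 : ℕ), true)] else []) ++
      List.replicate (l.f (t+1)) ((t+1 : ℕ), false), x.1 = t + 1 := by
    intro t x hx
    rcases List.mem_append.1 hx with hx | hx
    · split_ifs at hx <;> simp_all
    · rw [List.eq_of_mem_replicate hx]
  rw [partsListUpTo, List.pairwise_flatMap]
  refine ⟨fun t _ => List.pairwise_of_forall_mem_list fun x hx y hy => ?_,
    List.pairwise_lt_range.imp fun hst x hx y hy => ?_⟩
  · rw [hblock t x hx, hblock t y hy]
  · rw [hblock _ x hx, hblock _ y hy]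
    omega

lemma ggMarked_pairwise (l : Overpartition) :
    (ggMarked l).Pairwise (fun a b : OPart × ℕ => a.1.1 ≤ b.1.1) := by
  have h := partsListUpTo_pairwise l (obound l)
  rwa [← partsList, ← List.nil_append (partsList l), ← List.map_nil,
    ← map_fst_markFold, List.pairwise_map] at h

lemma exists_prefix_of_mem_ggMarked {l : Overpartition} {z : OPart × ℕ}
    (hz : z ∈ ggMarked l) :
    ∃ A : List (OPart × ℕ), z.2 = ggMarkOf l A z.1 ∧ (∀ w ∈ A, w ∈ ggMarked l) ∧
      ∀ w ∈ ggMarked l, w.1.1 < z.1.1 → w ∈ A := by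
  rcases mem_markFold (ggMarkOf l) (partsList l) [] hz with hz | ⟨A, R, hsplit, hmark⟩
  · simp at hz
  have hsorted := ggMarked_pairwise l
  rw [ggMarked, hsplit, List.pairwise_append, List.pairwise_cons] at hsorted
  refine ⟨A, hmark, fun w hw => ?_, fun w hw hlt => ?_⟩
  · rw [ggMarked, hsplit]
    exact List.mem_append_left _ hw
  · rw [ggMarked, hsplit] at hw
    rcases List.mem_append.1 hw with hw | hw | ⟨_, hw⟩
    · exact hw
    · omega
    · exact absurd (hsorted.2.1.1 w hw) (by omega)

lemma ggMarkOf_ne_of_mem_lower {l : Overpartition} {A : List (OPart × ℕ)} {s r : ℕ}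
    (hs : s % 2 = 0)
    (hone : 1 ∈ marksWhere A (fun q => decide (q.1 = s - 2 ∨ (q.1 = s - 1 ∧ q.2 = true))))
    (hr : r ∈ marksWhere A (fun q => decide (q.1 = s - 2 ∨ (q.1 = s - 1 ∧ q.2 = true)))) :
    ggMarkOf l A (s, false) ≠ r := by
  have hs' : s % 2 ≠ 1 := by omega
  rw [ggMarkOf, if_neg (by simp [hs']), if_neg (by simp), if_neg hs']
  dsimp only
  rw [if_pos (Or.inl hone)]
  rintro rfl
  exact mex1_not_mem _ (Finset.mem_union_right _ hr)

section OddParts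

variable {l : Overpartition} {p : OPart} {m : ℕ}

lemma overlined_of_odd_of_two_le_mark (h : (p, m) ∈ ggMarked l) (hp : p.1 % 2 = 1)
    (hm : 2 ≤ m) : p.2 = true := by
  obtain ⟨A, hmark, -, -⟩ := exists_prefix_of_mem_ggMarked h
  by_contra hov
  rw [Bool.not_eq_true] at hov
  simp only [ggMarkOf, hp, hov, and_self, ↓reduceIte] at hmark
  omega

lemma existsMarkedAt_pred_of_odd {r : ℕ} (h : (p, m) ∈ ggMarked l) (hp : p.1 % 2 = 1)
    (hr : 1 ≤ r) (hrm : r < m) : ExistsMarkedAt (ggMarked l) (p.1 - 1) r := by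
  have hov := overlined_of_odd_of_two_le_mark h hp (by omega)
  obtain ⟨A, hmark, hA, -⟩ := exists_prefix_of_mem_ggMarked h
  simp only [ggMarkOf, hp, hov, Bool.true_eq_false, and_false, ↓reduceIte, one_ne_zero,
    and_true] at hmark
  obtain ⟨q, hq, hqs, rfl⟩ := mem_marksWhere.1 (mem_of_lt_mex1 hr (hmark ▸ hrm))
  exact ⟨q, hA q hq, of_decide_eq_true hqs, rfl⟩

/-- The `1`-marked part of size `p.1 - 1` puts a non-overlined part `p.1 + 1` in case (b) of
the marking rule. -/
lemma not_existsMarkedAt_succ_of_overlined_odd (h : (p, m) ∈ ggMarked l) (hov : p.2 = true)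
    (hp : p.1 % 2 = 1) (hm : 2 ≤ m) : ¬ ExistsMarkedAt (ggMarked l) (p.1 + 1) m := by
  rintro ⟨⟨⟨s, ov⟩, m'⟩, h', rfl, rfl⟩
  obtain ⟨q, hq, hqs, hq1⟩ := existsMarkedAt_pred_of_odd h hp le_rfl (by omega)
  obtain ⟨A, hmark, -, hA⟩ := exists_prefix_of_mem_ggMarked h'
  have hpar : (p.1 + 1) % 2 = 0 := by omega
  cases ov
  · refine ggMarkOf_ne_of_mem_lower hpar ?_ ?_ hmark.symm
    · exact mem_marksWhere.2 ⟨q, hA q hq (by simp only; omega), by simp [hqs], hq1⟩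
    · exact mem_marksWhere.2 ⟨(p, _), hA _ h (by simp), by simp [hov], rfl⟩
  · simp only [ggMarkOf, hpar, zero_ne_one, Bool.true_eq_false, and_self, ↓reduceIte] at hmark
    omega

end OddParts

lemma oneMarkedDesc_pairwise (l : Overpartition) :
    (oneMarkedDesc l).Pairwise (fun a b : OPart => b.1 ≤ a.1) := by
  rw [oneMarkedDesc, List.pairwise_reverse, List.pairwise_map]
  exact (ggMarked_pairwise l).sublist List.filter_sublist

lemma mem_oneMarkedDesc {l : Overpartition} {q : OPart × ℕ} (hq : q ∈ ggMarked l)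
    (hq1 : q.2 = 1) : q.1 ∈ oneMarkedDesc l := by
  rw [oneMarkedDesc, List.mem_reverse, List.mem_map]
  exact ⟨q, List.mem_filter.2 ⟨hq, by simp [hq1]⟩, rfl⟩

lemma forcedSingleton_of_mem_of_odd {one : List OPart}
    (hanti : one.Pairwise (fun a b : OPart => b.1 ≤ a.1)) {j : ℕ} {y q : OPart}
    (hy : one[j - 1]? = some y) (hodd : y.1 % 2 = 1) (hq : q ∈ one) (hqy : q.1 = y.1 + 1) :
    ForcedSingleton one j := by
  have hmono : ∀ (a b : ℕ) (ha : a < one.length) (hb : b < one.length), a ≤ b →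
      one[b].1 ≤ one[a].1 := by
    intro a b ha hb hab
    rcases hab.eq_or_lt with rfl | hlt
    · exact le_rfl
    · exact List.pairwise_iff_getElem.1 hanti a b ha hb hlt
  obtain ⟨e, he, rfl⟩ := List.getElem_of_mem hq
  obtain ⟨hj, rfl⟩ := List.getElem?_eq_some_iff.1 hy
  have he_lt : e < j - 1 := by
    by_contra! hge
    have := hmono _ _ hj he hge
    omega
  have hprev_le := hmono e (j - 2) he (by omega) (by omega)
  have hprev_ge := hmono (j - 2) (j - 1) (by omega) hj (by omega)
  refine ⟨by omega, one[j - 1], one[j - 2], List.getElem?_eq_getElem hj,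
    List.getElem?_eq_getElem (by omega), ?_⟩
  rcases hprev_ge.eq_or_lt with heq | hlt
  · exact Or.inl heq
  · exact Or.inr ⟨hodd, by omega⟩

lemma chainStep.succ_eq_of_odd {L : List (OPart × ℕ)} {b : ℕ} {y x : OPart}
    (hs : chainStep L b y x) (hx : x.1 % 2 = 1) : y.1 + 1 = x.1 := by
  by_cases hy : y.1 % 2 = 1
  · have := hs.1 hy
    omega
  · have hbounds := hs.2 (by omega)
    by_cases hm : ExistsMarkedAt L (y.1 + 2) (b + 1)
    · have := hbounds.2 hm
      omega
    · have := hbounds.1 hm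
      omega

lemma chainStep.eq_of_existsMarkedAt {L : List (OPart × ℕ)} {b : ℕ} {y z : OPart}
    (hs : chainStep L b y z) (hz : z.1 % 2 = 0) (hzm : ExistsMarkedAt L z.1 (b + 1))
    (hy : y.1 % 2 = 1 → ¬ ExistsMarkedAt L (y.1 + 1) (b + 1)) : y.1 = z.1 := by
  by_cases hyodd : y.1 % 2 = 1
  · exact absurd (hs.1 hyodd ▸ hzm) (hy hyodd)
  · have hbounds := hs.2 (by omega)
    by_cases hm : ExistsMarkedAt L (y.1 + 2) (b + 1)
    · have := hbounds.2 hm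
      omega
    · have := hbounds.1 hm
      have : z.1 ≠ y.1 + 2 := fun h2 => hm (h2 ▸ hzm)
      omega

namespace IsClusterDecomp

variable {l : Overpartition} {α : ℕ → List OPart}

lemma eq_nil (h : IsClusterDecomp l α) {j : ℕ} (hj : j = 0 ∨ ggN l 1 < j) : α j = [] :=
  h.1 j hj

lemma head?_eq (h : IsClusterDecomp l α) {j : ℕ} (hj1 : 1 ≤ j) (hjN : j ≤ ggN l 1) :
    (α j).head? = (oneMarkedDesc l)[j - 1]? :=
  h.2.1 j hj1 hjN

lemma coe_ggMarked_eq_sum (h : IsClusterDecomp l α) :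
    (ggMarked l : Multiset (OPart × ℕ)) = ∑ j ∈ Finset.Icc 1 (ggN l 1), clusterMS (α j) :=
  h.2.2.1

lemma length_eq_one (h : IsClusterDecomp l α) {j : ℕ}
    (hj : ForcedSingleton (oneMarkedDesc l) j) : (α j).length = 1 :=
  h.2.2.2.1 j hj

lemma chainStep_of_getElem? (h : IsClusterDecomp l α) {j b : ℕ} {x y : OPart}
    (hx : (α j)[b]? = some x) (hy : (α j)[b + 1]? = some y) : chainStep (ggMarked l) b x y :=
  h.2.2.2.2.1 j b x y hx hy

lemma mem_Icc_of_getElem? (h : IsClusterDecomp l α) {j b : ℕ} {x : OPart}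
    (hx : (α j)[b]? = some x) : 1 ≤ j ∧ j ≤ ggN l 1 := by
  by_contra hj
  rw [h.eq_nil (by omega)] at hx
  simp at hx

lemma mem_ggMarked (h : IsClusterDecomp l α) {j b : ℕ} {x : OPart}
    (hx : (α j)[b]? = some x) : (x, b + 1) ∈ ggMarked l := by
  obtain ⟨hj1, hjN⟩ := h.mem_Icc_of_getElem? hx
  have hcl : (x, b + 1) ∈ clusterMS (α j) := by
    simp only [clusterMS, Multiset.mem_coe, List.mem_map]
    exact ⟨(x, b), List.mk_mem_zipIdx_iff_getElem?.2 hx, rfl⟩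
  have hle : clusterMS (α j) ≤ ∑ j' ∈ Finset.Icc 1 (ggN l 1), clusterMS (α j') :=
    Finset.single_le_sum (f := fun j' => clusterMS (α j')) (fun _ _ => zero_le)
      (Finset.mem_Icc.2 ⟨hj1, hjN⟩)
  rw [← h.coe_ggMarked_eq_sum] at hle
  simpa using Multiset.mem_of_le hle hcl

lemma getElem?_oneMarkedDesc (h : IsClusterDecomp l α) {j : ℕ} {y : OPart}
    (hy : (α j)[0]? = some y) : (oneMarkedDesc l)[j - 1]? = some y := by
  obtain ⟨hj1, hjN⟩ := h.mem_Icc_of_getElem? hy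
  rw [← h.head?_eq hj1 hjN, List.head?_eq_getElem?, hy]

lemma not_existsMarkedAt_succ_of_odd (h : IsClusterDecomp l α) {j b : ℕ} {y z : OPart}
    (hy : (α j)[b]? = some y) (hz : (α j)[b + 1]? = some z) (hodd : y.1 % 2 = 1) :
    ¬ ExistsMarkedAt (ggMarked l) (y.1 + 1) (b + 1) := by
  rcases Nat.eq_zero_or_pos b with rfl | hb
  · rintro ⟨q, hq, hqs, hqm⟩
    have hforced := forcedSingleton_of_mem_of_odd (oneMarkedDesc_pairwise l)
      (h.getElem?_oneMarkedDesc hy) hodd (mem_oneMarkedDesc hq hqm) hqs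
    have hlen := (List.getElem?_eq_some_iff.1 hz).1
    have := h.length_eq_one hforced
    omega
  · have hy_mem := h.mem_ggMarked hy
    exact not_existsMarkedAt_succ_of_overlined_odd hy_mem
      (overlined_of_odd_of_two_le_mark hy_mem hodd (by omega)) hodd (by omega)

lemma size_succ_eq_of_lt_odd (h : IsClusterDecomp l α) {j b d : ℕ} {x y : OPart}
    (hy : (α j)[b]? = some y) (hx : (α j)[d]? = some x) (hbd : b < d) (hodd : x.1 % 2 = 1) :
    y.1 + 1 = x.1 := by
  obtain ⟨n, rfl⟩ : ∃ n, d = b + n + 1 := ⟨d - b - 1, by omega⟩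
  induction n generalizing b y with
  | zero => exact (h.chainStep_of_getElem? hy hx).succ_eq_of_odd hodd
  | succ n ih =>
    obtain ⟨z, hz⟩ : ∃ z, (α j)[b + 1]? = some z :=
      ⟨_, List.getElem?_eq_getElem (by have := (List.getElem?_eq_some_iff.1 hx).1; omega)⟩
    have hzx : z.1 + 1 = x.1 :=
      ih hz (by rwa [show b + 1 + n + 1 = b + (n + 1) + 1 by omega]) (by omega)
    have hzm : ExistsMarkedAt (ggMarked l) z.1 (b + 1) := by
      have := existsMarkedAt_pred_of_odd (h.mem_ggMarked hx) hodd (r := b + 1)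
        (by omega) (by omega)
      rwa [show x.1 - 1 = z.1 by omega] at this
    have hyz := (h.chainStep_of_getElem? hy hz).eq_of_existsMarkedAt (by omega) hzm
      (h.not_existsMarkedAt_succ_of_odd hy hz)
    omega

end IsClusterDecomp

theorem cluster_at_most_one_odd_general
    (l : Overpartition) (α : ℕ → List OPart) (h : IsClusterDecomp l α)
    (t : ℕ) :
    (∀ (b c : ℕ) (x y : OPart), (α t)[b]? = some x → (α t)[c]? = some y →
      x.1 % 2 = 1 → y.1 % 2 = 1 → b = c) ∧
    (∀ (d : ℕ) (x h0 : OPart), (α t)[d]? = some x → (α t)[0]? = some h0 →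
      x.1 % 2 = 1 → x.1 ≤ h0.1 + 1) := by
  refine ⟨fun b c x y hx hy hxodd hyodd => ?_, fun d x h0 hx h0' hodd => ?_⟩
  · by_contra hbc
    rcases Nat.lt_or_gt_of_ne hbc with hlt | hlt
    · have := h.size_succ_eq_of_lt_odd hx hy hlt hyodd
      omega
    · have := h.size_succ_eq_of_lt_odd hy hx hlt hxodd
      omega
  · rcases Nat.eq_zero_or_pos d with rfl | hd
    · obtain rfl : x = h0 := Option.some_injective _ (hx.symm.trans h0')
      omega
    · have := h.size_succ_eq_of_lt_odd h0' hx hd hodd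
      omega

/-- Proposition 5.3: each cluster of the Göllnitz–Gordon marking of an
overpartition contains at most one odd part, and if the cluster `α^{(t)}` contains an
odd part `α_d^{(t)}`, then `|α_d^{(t)}| - |α_1^{(t)}| ≤ 1`. -/
theorem cluster_at_most_one_odd
    (l : Overpartition) (α : ℕ → List OPart) (h : IsClusterDecomp l α)
    (t : ℕ) (ht1 : 1 ≤ t) (ht : t ≤ ggN l 1) :
    (∀ (b c : ℕ) (x y : OPart), (α t)[b]? = some x → (α t)[c]? = some y →
      x.1 % 2 = 1 → y.1 % 2 = 1 → b = c) ∧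
    (∀ (d : ℕ) (x h0 : OPart), (α t)[d]? = some x → (α t)[0]? = some h0 →
      x.1 % 2 = 1 → x.1 ≤ h0.1 + 1) :=
  cluster_at_most_one_odd_general l α h t
end
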